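/- Let Φ be strictly increasing with weak scaling exponents in (0,2), let θ > 0, and let f : (0,∞) → (0,∞) be bounded and satisfy f(s) ≤ c3 Φ⁻¹(s^{−θ}) for all s ≥ s0, for some constants c3, s0 > 0. Then there exist constants c5, s1 > 0 such that f*⁻¹(Φ⁻¹(s)) ≤ c5 s^{−1/θ} for all 0 < s ≤ s1. -/

import Mathlib

/-! Upper scaling of `Φ` gives `C · Φ⁻¹(t / (cU C^α2)) ≤ Φ⁻¹(t)` for every `C ≥ 1`. Take
`C = max c3 1`, `ε = 1 / (cU C^α2)` and `r = (ε s)^(-1/θ)`; for small `s` we have `r ≥ s0`, so every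
`u ≥ r` satisfies `f u ≤ c3 Φ⁻¹(u^(-θ)) ≤ C Φ⁻¹(ε s) ≤ Φ⁻¹(s)`. Hence `f*(r) ≤ Φ⁻¹(s)` and
`f*⁻¹(Φ⁻¹(s)) ≤ r = ε^(-1/θ) s^(-1/θ)`. Lower scaling only serves to make `Φ` unbounded, so that
the infima defining `Φ⁻¹` are taken over non-empty sets. -/

open MeasureTheory Set Real

noncomputable section

/-- Generalized inverse `Φ⁻¹(t) = inf {s > 0 : Φ(s) ≥ t}`. -/
def invFun' (Φ : ℝ → ℝ) (t : ℝ) : ℝ := sInf {s : ℝ | 0 < s ∧ t ≤ Φ s}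

/-- `f*(r) = sup_{s ≥ r} f(s)`. -/
def fStar (f : ℝ → ℝ) (r : ℝ) : ℝ := sSup (f '' Ici r)

/-- `f*⁻¹(v) = inf {s > 0 : f*(s) ≤ v}`. -/
def fStarInv (f : ℝ → ℝ) (v : ℝ) : ℝ := sInf {s : ℝ | 0 < s ∧ fStar f s ≤ v}

open Filter

section InvFun

variable {Φ : ℝ → ℝ}

theorem invFun'_nonneg (Φ : ℝ → ℝ) (t : ℝ) : 0 ≤ invFun' Φ t :=
  Real.sInf_nonneg fun _ hx => hx.1.le

theorem invFun'_le {t x : ℝ} (hx : 0 < x) (htx : t ≤ Φ x) : invFun' Φ t ≤ x :=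
  csInf_le ⟨0, fun _ hy => hy.1.le⟩ ⟨hx, htx⟩

theorem le_invFun' {t a : ℝ} (hne : ∃ x > 0, t ≤ Φ x) (h : ∀ x > 0, t ≤ Φ x → a ≤ x) :
    a ≤ invFun' Φ t :=
  le_csInf (let ⟨x, hx, htx⟩ := hne; ⟨x, hx, htx⟩) fun x hx => h x hx.1 hx.2

theorem exists_pos_le_of_tendsto_atTop (hΦ : Tendsto Φ atTop atTop) (t : ℝ) :
    ∃ x > 0, t ≤ Φ x :=
  ((eventually_gt_atTop 0).and (hΦ.eventually_ge_atTop t)).exists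

theorem invFun'_mono (hΦ : Tendsto Φ atTop atTop) : Monotone (invFun' Φ) := fun _ t₂ h =>
  le_invFun' (exists_pos_le_of_tendsto_atTop hΦ t₂) fun _ hx htx => invFun'_le hx (h.trans htx)

theorem tendsto_atTop_of_lower_scaling {α cL : ℝ} (hα : 0 < α) (hcL : 0 < cL) (hΦ1 : 0 < Φ 1)
    (hlow : ∀ R ≥ 1, cL * R ^ α ≤ Φ R / Φ 1) : Tendsto Φ atTop atTop := by
  refine tendsto_atTop_mono' _ ?_ ((tendsto_rpow_atTop hα).const_mul_atTop (mul_pos hcL hΦ1))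
  filter_upwards [eventually_ge_atTop 1] with R hR
  have := hlow R hR
  rw [le_div_iff₀ hΦ1] at this
  linarith

theorem mul_invFun'_div_le {α cU C : ℝ} (hΦpos : ∀ u > 0, 0 < Φ u) (hΦ : Tendsto Φ atTop atTop)
    (hcU : 0 < cU) (hC : 1 ≤ C) (hup : ∀ r R : ℝ, 0 < r → r ≤ R → Φ R / Φ r ≤ cU * (R / r) ^ α)
    (t : ℝ) : C * invFun' Φ (t / (cU * C ^ α)) ≤ invFun' Φ t := by
  have hC0 : 0 < C := one_pos.trans_le hC
  have hK : 0 < cU * C ^ α := by positivity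
  refine le_invFun' (exists_pos_le_of_tendsto_atTop hΦ t) fun x hx htx => ?_
  have hxC : 0 < x / C := div_pos hx hC0
  have hscal := hup (x / C) x hxC (div_le_self hx.le hC)
  rw [div_div_cancel₀ hx.ne', div_le_iff₀ (hΦpos _ hxC)] at hscal
  have hrescaled : t / (cU * C ^ α) ≤ Φ (x / C) := by
    rw [div_le_iff₀' hK]
    linarith
  calc C * invFun' Φ (t / (cU * C ^ α)) ≤ C * (x / C) :=
        mul_le_mul_of_nonneg_left (invFun'_le hxC hrescaled) hC0.le
    _ = x := mul_div_cancel₀ x hC0.ne'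

end InvFun

section FStar

variable {f : ℝ → ℝ}

theorem fStar_le {r v : ℝ} (h : ∀ u ≥ r, f u ≤ v) : fStar f r ≤ v :=
  csSup_le (nonempty_Ici.image f) (forall_mem_image.2 h)

theorem fStarInv_le {r v : ℝ} (hr : 0 < r) (h : fStar f r ≤ v) : fStarInv f v ≤ r :=
  csInf_le ⟨0, fun _ hx => hx.1.le⟩ ⟨hr, h⟩

end FStar

theorem statement12_general
    (Φ : ℝ → ℝ) (hΦpos : ∀ u > 0, 0 < Φ u)
    (α1 α2 cL cU : ℝ) (hα1 : 0 < α1)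
    (hcL : 0 < cL) (hcU : cL ≤ cU)
    (hΦscal : ∀ r R : ℝ, 0 < r → r ≤ R →
      cL * (R / r) ^ α1 ≤ Φ R / Φ r ∧ Φ R / Φ r ≤ cU * (R / r) ^ α2)
    (θ : ℝ) (hθ : 0 < θ)
    (f : ℝ → ℝ)
    (c3 s0 : ℝ) (hs0 : 0 < s0)
    (hf : ∀ s ≥ s0, f s ≤ c3 * invFun' Φ (s ^ (-θ))) :
    ∃ c5 > (0 : ℝ), ∃ s1 > (0 : ℝ), ∀ s : ℝ, 0 < s → s ≤ s1 →
      fStarInv f (invFun' Φ s) ≤ c5 * s ^ (-(1 / θ)) := by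
  have hΦ : Tendsto Φ atTop atTop :=
    tendsto_atTop_of_lower_scaling hα1 hcL (hΦpos 1 one_pos) fun R hR => by
      simpa using (hΦscal 1 R one_pos hR).1
  set C := max c3 1
  set ε := 1 / (cU * C ^ α2)
  have hε : 0 < ε := by
    have : 0 < C := one_pos.trans_le (le_max_right _ _)
    have : 0 < cU := hcL.trans_le hcU
    positivity
  refine ⟨ε ^ (-(1 / θ)), by positivity, s0 ^ (-θ) / ε, by positivity, fun s hs hss1 => ?_⟩
  set r := (ε * s) ^ (-(1 / θ))
  have hr : 0 < r := by positivity
  have hrθ : r ^ (-θ) = ε * s := by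
    rw [← rpow_mul (by positivity), show -(1 / θ) * -θ = 1 by field_simp, rpow_one]
  have hs0r : s0 ≤ r := by
    rw [← rpow_le_rpow_iff_of_neg hr hs0 (neg_lt_zero.2 hθ), hrθ]
    exact (le_div_iff₀' hε).1 hss1
  have hfr : ∀ u ≥ r, f u ≤ invFun' Φ s := fun u hu => calc
    f u ≤ c3 * invFun' Φ (u ^ (-θ)) := hf u (hs0r.trans hu)
    _ ≤ C * invFun' Φ (ε * s) := by
      rw [← hrθ]
      exact mul_le_mul (le_max_left _ _)
        (invFun'_mono hΦ (rpow_le_rpow_of_nonpos hr hu (neg_nonpos.2 hθ.le)))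
        (invFun'_nonneg _ _) (by positivity)
    _ ≤ invFun' Φ s := by
      simpa only [ε, one_div_mul_eq_div] using
        mul_invFun'_div_le hΦpos hΦ (hcL.trans_le hcU) (le_max_right c3 1)
          (fun r R hr hrR => (hΦscal r R hr hrR).2) s
  rw [← mul_rpow hε.le hs.le]
  exact fStarInv_le hr (fStar_le hfr)

theorem statement12
    (Φ : ℝ → ℝ) (hΦpos : ∀ u > 0, 0 < Φ u) (hΦmono : StrictMonoOn Φ (Ioi 0))
    (α1 α2 cL cU : ℝ) (hα1 : 0 < α1) (hα12 : α1 ≤ α2) (hα2 : α2 < 2)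
    (hcL : 0 < cL) (hcU : cL ≤ cU)
    (hΦscal : ∀ r R : ℝ, 0 < r → r ≤ R →
      cL * (R / r) ^ α1 ≤ Φ R / Φ r ∧ Φ R / Φ r ≤ cU * (R / r) ^ α2)
    (θ : ℝ) (hθ : 0 < θ)
    (f : ℝ → ℝ) (hfpos : ∀ u > 0, 0 < f u) (hfbdd : ∃ Mf : ℝ, ∀ u > 0, f u ≤ Mf)
    (c3 s0 : ℝ) (hc3 : 0 < c3) (hs0 : 0 < s0)
    (hf : ∀ s ≥ s0, f s ≤ c3 * invFun' Φ (s ^ (-θ))) :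
    ∃ c5 > (0 : ℝ), ∃ s1 > (0 : ℝ), ∀ s : ℝ, 0 < s → s ≤ s1 →
      fStarInv f (invFun' Φ s) ≤ c5 * s ^ (-(1 / θ)) :=
  statement12_general Φ hΦpos α1 α2 cL cU hα1 hcL hcU hΦscal θ hθ f c3 s0 hs0 hf
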